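/- arXiv:2602.16761 — 4 statements merged into one kernel-verified Lean document; each statement's English description precedes it below -/
import Mathlib

section
/- For every integer n ≥ 1, the coefficient of x^{2n−2} in Ξ_n equals (−1)^{n+1}/2^{2n} and the coefficient of x^{2n−2} in Λ_n equals (−1)^{n+1}/(2^{2n+1}−1); equivalently, C^B_{n,n−1} = 2^{2n−2}(2n−1)! and C^A_{n,n−1} = (2n)!/2. In particular both polynomials have degree exactly 2n−2. -/
open Finset

/-- Type A Eulerian number ⟨m,k⟩. -/
def eulerianA (m k : ℕ) : ℤ :=
  ∑ j ∈ Finset.range (k + 1),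
    (-1 : ℤ) ^ j * (Nat.choose (m + 1) j) * ((k + 1 - j : ℕ) ^ m : ℤ)

/-- Type B Eulerian number ⟨m,k⟩^B. -/
def eulerianB (m k : ℕ) : ℤ :=
  ∑ j ∈ Finset.range (k + 1),
    (-1 : ℤ) ^ j * (Nat.choose (m + 1) j) * ((2 * (k - j) + 1 : ℕ) ^ m : ℤ)

/-- Inner sum Σ_{i=0}^{k} (−1)^i binom(k,i) binom(2n−2k−1, 2t−2i+1), with the
convention that the binomial vanishes when the lower index is negative. -/
def innerSum (n k t : ℕ) : ℤ :=
  ∑ i ∈ Finset.range (k + 1),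
    if i ≤ t then
      (-1 : ℤ) ^ i * (Nat.choose k i) * (Nat.choose (2 * n - 2 * k - 1) (2 * (t - i) + 1))
    else 0

/-- Coefficient C^B_{n,t}. -/
def CB (n t : ℕ) : ℤ :=
  ∑ k ∈ Finset.range n, eulerianB (2 * n - 1) k * (-1) ^ k * innerSum n k t

/-- Coefficient C^A_{n,t}. -/
def CA (n t : ℕ) : ℤ :=
  ∑ k ∈ Finset.range n, eulerianA (2 * n) k * (-1) ^ k * innerSum n k t

/-- The even polynomial Ξ_n, as a function on ℝ. -/
noncomputable def Xi (n : ℕ) (x : ℝ) : ℝ :=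
  ((-1 : ℝ) ^ (n + 1) / (2 ^ (4 * n - 2) * (Nat.factorial (2 * n - 1)))) *
    ∑ t ∈ Finset.range n, (CB n t : ℝ) * x ^ (2 * t)

/-- The even polynomial Λ_n, as a function on ℝ. -/
noncomputable def Lam (n : ℕ) (x : ℝ) : ℝ :=
  (2 * (-1 : ℝ) ^ (n + 1) / ((2 ^ (2 * n + 1) - 1) * (Nat.factorial (2 * n)))) *
    ∑ t ∈ Finset.range n, (CA n t : ℝ) * x ^ (2 * t)

/-- Ξ_n as a polynomial with real coefficients. -/
noncomputable def XiPoly (n : ℕ) : Polynomial ℝ :=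
  Polynomial.C ((-1 : ℝ) ^ (n + 1) / (2 ^ (4 * n - 2) * (Nat.factorial (2 * n - 1)))) *
    ∑ t ∈ Finset.range n, Polynomial.C (CB n t : ℝ) * Polynomial.X ^ (2 * t)

/-- Λ_n as a polynomial with real coefficients. -/
noncomputable def LamPoly (n : ℕ) : Polynomial ℝ :=
  Polynomial.C (2 * (-1 : ℝ) ^ (n + 1) / ((2 ^ (2 * n + 1) - 1) * (Nat.factorial (2 * n)))) *
    ∑ t ∈ Finset.range n, Polynomial.C (CA n t : ℝ) * Polynomial.X ^ (2 * t)

/-!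
For `t = n - 1` only the term `i = k` of the inner sum survives and equals `(-1)^k`, so
`C^B_{n,n-1}` and `C^A_{n,n-1}` are the sums of the first `n` Eulerian numbers `⟨2n-1,k⟩^B`,
resp. `⟨2n,k⟩`. Both kinds are instances of
`E_{a,b}(m,k) = ∑_{j ≤ k} (-1)^j C(m+1,j) (a + b(k-j))^m`, with `(a,b) = (1,1)` and `(1,2)`.
Exchanging the order of summation turns `∑_{k ≤ m} E_{a,b}(m,k)` into the `m`-th forward
difference of `x ↦ (a + bx)^m`, which is `b^m m!`. Splitting `x^m = max(x,0)^m + min(x,0)^m` and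
using that the `(m+1)`-st difference of a polynomial of degree `m` vanishes gives the symmetry
`E_{a,b}(m,k) = E_{a,b}(m,k')` for `b(k+k') + 2a = b(m+1)`, so the first `n` numbers make up
exactly half of the total.
-/

section AlternatingSums

open fwdDiff

variable {R : Type*} [CommRing R]

theorem neg_one_pow_sub_of_le {n j : ℕ} (h : j ≤ n) :
    (-1 : R) ^ (n - j) = (-1) ^ n * (-1) ^ j := by
  obtain ⟨d, rfl⟩ := Nat.exists_eq_add_of_le h
  rw [Nat.add_sub_cancel_left, pow_add, mul_right_comm, ← pow_add, Even.neg_one_pow ⟨j, rfl⟩,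
    one_mul]

theorem fwdDiff_iter_affine_pow (a b : R) (m : ℕ) :
    (Δ_[1])^[m] (fun r : R ↦ (a + b * r) ^ m) = fun _ ↦ b ^ m * m.factorial := by
  have hsplit : (fun r : R ↦ (a + b * r) ^ m) = (b ^ m • fun r : R ↦ r ^ m) +
      fun r ↦ ∑ i ∈ range m, (b ^ i * a ^ (m - i) * m.choose i) * r ^ i := by
    funext r
    simp only [add_comm a, add_pow, sum_range_succ, Nat.choose_self, Nat.sub_self, pow_zero,
      Nat.cast_one, mul_one, Pi.add_apply, Pi.smul_apply, smul_eq_mul, mul_pow]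
    rw [add_comm]
    congr 1
    exact sum_congr rfl fun i _ ↦ by ring
  rw [hsplit, fwdDiff_iter_add, fwdDiff_iter_const_smul, fwdDiff_iter_eq_factorial,
    fwdDiff_iter_sum_mul_pow_eq_zero, add_zero]
  rfl

theorem fwdDiff_iter_succ_affine_pow (a b : R) (m : ℕ) :
    (Δ_[1])^[m + 1] (fun r : R ↦ (a + b * r) ^ m) = 0 := by
  rw [Function.iterate_succ_apply', fwdDiff_iter_affine_pow, fwdDiff_const]
  rfl

theorem sum_range_neg_one_pow_mul_choose_mul (f : R → R) (n : ℕ) :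
    ∑ j ∈ range (n + 1), (-1) ^ j * n.choose j * f j = (-1) ^ n * (Δ_[1])^[n] f 0 := by
  rw [fwdDiff_iter_eq_sum_shift, mul_sum]
  refine sum_congr rfl fun j hj ↦ ?_
  have hsq : ((-1 : R) ^ n) ^ 2 = 1 := by rw [← pow_mul, pow_mul']; simp
  rw [neg_one_pow_sub_of_le (Nat.lt_succ_iff.mp (mem_range.mp hj))]
  simp only [zsmul_eq_mul, nsmul_eq_mul, zero_add, mul_one]
  push_cast
  linear_combination -(-1 : R) ^ j * n.choose j * f j * hsq

theorem sum_range_neg_one_pow_mul_choose_mul_affine_pow (a b : R) (m : ℕ) :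
    ∑ j ∈ range (m + 2), (-1) ^ j * (m + 1).choose j * (a + b * j) ^ m = 0 := by
  rw [sum_range_neg_one_pow_mul_choose_mul (fun r ↦ (a + b * r) ^ m),
    fwdDiff_iter_succ_affine_pow]
  simp

end AlternatingSums

theorem max_zero_pow_add_min_zero_pow {R : Type*} [Semiring R] [LinearOrder R] {m : ℕ}
    (hm : m ≠ 0) (x : R) : max x 0 ^ m + min x 0 ^ m = x ^ m := by
  rcases le_total x 0 with hx | hx
  · simp [max_eq_right hx, min_eq_left hx, zero_pow hm]
  · simp [max_eq_left hx, min_eq_right hx, zero_pow hm]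

theorem sum_range_two_mul_of_reflect {M : Type*} [AddCommMonoid M] {f : ℕ → M} {n : ℕ}
    (h : ∀ k < n, f (n + k) = f (n - 1 - k)) :
    ∑ k ∈ range (2 * n), f k = 2 • ∑ k ∈ range n, f k := by
  rw [two_mul, sum_range_add, sum_congr rfl fun k hk ↦ h k (mem_range.mp hk),
    sum_range_reflect f n, two_nsmul]

section AffineEulerian

def affineEulerian (a b : ℤ) (m k : ℕ) : ℤ :=
  ∑ j ∈ range (k + 1), (-1) ^ j * (m + 1).choose j * (a + b * (k - j : ℕ)) ^ m

theorem eulerianA_eq_affineEulerian (m k : ℕ) : eulerianA m k = affineEulerian 1 1 m k := by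
  refine sum_congr rfl fun j hj ↦ ?_
  rw [show k + 1 - j = 1 + (k - j) by have := mem_range.mp hj; omega]
  push_cast
  ring

theorem eulerianB_eq_affineEulerian (m k : ℕ) : eulerianB m k = affineEulerian 1 2 m k := by
  refine sum_congr rfl fun j _ ↦ ?_
  push_cast
  ring

theorem sum_range_affineEulerian (a b : ℤ) (m : ℕ) :
    ∑ k ∈ range (m + 1), affineEulerian a b m k = b ^ m * m.factorial := by
  calc ∑ k ∈ range (m + 1), affineEulerian a b m k
      = ∑ j ∈ range (m + 1), ∑ i ∈ range (m + 1 - j),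
          (-1) ^ j * (m + 1).choose j * (a + b * i) ^ m :=
        sum_range_diag_flip (m + 1) fun j i ↦ (-1) ^ j * (m + 1).choose j * (a + b * i) ^ m
    _ = ∑ i ∈ range (m + 1), ∑ j ∈ range (m + 1 - i),
          (-1) ^ j * (m + 1).choose j * (a + b * i) ^ m :=
        sum_comm' fun j i ↦ by simp only [mem_range]; omega
    _ = ∑ i ∈ range (m + 1), (-1) ^ (m - i) * m.choose i * (a + b * i) ^ m := by
        refine sum_congr rfl fun i hi ↦ ?_
        have hi : i ≤ m := Nat.lt_succ_iff.mp (mem_range.mp hi)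
        rw [← sum_mul, show m + 1 - i = m - i + 1 by omega,
          Int.alternating_sum_range_choose_eq_choose, Nat.choose_symm hi]
    _ = b ^ m * m.factorial := by
        rw [← congrFun (fwdDiff_iter_affine_pow a b m) 0, fwdDiff_iter_eq_sum_shift]
        simp

variable {a b : ℤ} {m : ℕ}

theorem affineEulerian_eq_sum_max_pow (ha : 0 ≤ a) (hab : a ≤ b) (hm : m ≠ 0) {k : ℕ}
    (hk : k ≤ m + 1) :
    affineEulerian a b m k =
      ∑ j ∈ range (m + 2), (-1) ^ j * (m + 1).choose j * max (a + b * (k - j)) 0 ^ m := by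
  refine sum_subset_zero_on_sdiff (range_subset_range.mpr (by omega)) (fun j hj ↦ ?_)
    (fun j hj ↦ ?_)
  · obtain ⟨-, hj⟩ := mem_sdiff.mp hj
    have hkj : (k : ℤ) + 1 ≤ j := by exact_mod_cast not_lt.mp (mem_range.not.mp hj)
    rw [max_eq_right (by nlinarith), zero_pow hm, mul_zero]
  · have hjk : j ≤ k := Nat.lt_succ_iff.mp (mem_range.mp hj)
    rw [Nat.cast_sub hjk, max_eq_left (by nlinarith)]

theorem affineEulerian_symm (ha : 0 ≤ a) (hab : a ≤ b) (hm : m ≠ 0) {k k' : ℕ}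
    (hk : k ≤ m + 1) (hk' : k' ≤ m + 1) (hkk' : b * (k + k') + 2 * a = b * (m + 1)) :
    affineEulerian a b m k = affineEulerian a b m k' := by
  set c : ℕ → ℤ := fun j ↦ (-1) ^ j * (m + 1).choose j
  have hpoly : ∑ j ∈ range (m + 2),
      c j * (max (a + b * (k - j)) 0 ^ m + min (a + b * (k - j)) 0 ^ m) = 0 := by
    simp_rw [max_zero_pow_add_min_zero_pow hm]
    rw [← sum_range_neg_one_pow_mul_choose_mul_affine_pow (a + b * k) (-b) m]
    exact sum_congr rfl fun j _ ↦ by ring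
  have hreflect : ∑ j ∈ range (m + 2), c j * min (a + b * (k - j)) 0 ^ m =
      -∑ j ∈ range (m + 2), c j * max (a + b * (k' - j)) 0 ^ m := by
    rw [← sum_range_reflect, ← sum_neg_distrib]
    refine sum_congr rfl fun j hj ↦ ?_
    have hj : j ≤ m + 1 := Nat.lt_succ_iff.mp (mem_range.mp hj)
    rw [show m + 2 - 1 - j = m + 1 - j by omega]
    have harg : a + b * (k - (m + 1 - j : ℕ)) = -(a + b * (k' - j)) := by
      push_cast [hj]
      linear_combination hkk'
    have hmin : min (-(a + b * (k' - j))) 0 = -max (a + b * (k' - j)) 0 := by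
      rw [← min_neg_neg, neg_zero]
    have hsq : ((-1 : ℤ) ^ m) ^ 2 = 1 := by rw [← pow_mul, mul_comm, pow_mul]; simp
    simp only [c, harg, hmin, Nat.choose_symm hj, neg_one_pow_sub_of_le hj, neg_pow (max _ _)]
    linear_combination -(-1) ^ j * ((m + 1).choose j : ℤ) * max (a + b * (k' - j)) 0 ^ m * hsq
  rw [affineEulerian_eq_sum_max_pow ha hab hm hk, affineEulerian_eq_sum_max_pow ha hab hm hk']
  simp only [mul_add, sum_add_distrib, hreflect] at hpoly
  linear_combination hpoly

theorem affineEulerian_self (hb : 0 ≤ b) (hm : m ≠ 0) :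
    affineEulerian b b m m = 0 := by
  rw [affineEulerian_eq_sum_max_pow hb le_rfl hm m.le_succ]
  convert sum_range_neg_one_pow_mul_choose_mul_affine_pow (b * (m + 1)) (-b) m using 1
  refine sum_congr rfl fun j hj ↦ ?_
  have hj : (j : ℤ) ≤ m + 1 := by exact_mod_cast Nat.lt_succ_iff.mp (mem_range.mp hj)
  rw [max_eq_left (by nlinarith)]
  ring

end AffineEulerian

theorem two_mul_sum_range_eulerianA {n : ℕ} (hn : n ≠ 0) :
    2 * ∑ k ∈ range n, eulerianA (2 * n) k = (2 * n).factorial := by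
  have hsymm : ∀ k < n, eulerianA (2 * n) (n + k) = eulerianA (2 * n) (n - 1 - k) := by
    intro k hk
    simp only [eulerianA_eq_affineEulerian]
    exact affineEulerian_symm zero_le_one le_rfl (by omega) (by omega) (by omega)
      (by push_cast [show k ≤ n - 1 by omega, show 1 ≤ n by omega]; ring)
  have htotal := sum_range_affineEulerian 1 1 (2 * n)
  rw [sum_range_succ, affineEulerian_self zero_le_one (by omega), add_zero, one_pow, one_mul,
    ← sum_congr rfl fun k _ ↦ eulerianA_eq_affineEulerian (2 * n) k,
    sum_range_two_mul_of_reflect hsymm, two_nsmul, ← two_mul] at htotal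
  exact htotal

theorem two_mul_sum_range_eulerianB {n : ℕ} (hn : n ≠ 0) :
    2 * ∑ k ∈ range n, eulerianB (2 * n - 1) k = 2 ^ (2 * n - 1) * (2 * n - 1).factorial := by
  have hsymm : ∀ k < n, eulerianB (2 * n - 1) (n + k) = eulerianB (2 * n - 1) (n - 1 - k) := by
    intro k hk
    simp only [eulerianB_eq_affineEulerian]
    exact affineEulerian_symm zero_le_one one_le_two (by omega) (by omega) (by omega)
      (by push_cast [show k ≤ n - 1 by omega, show 1 ≤ n by omega, show 1 ≤ 2 * n by omega]
          ring)
  have htotal := sum_range_affineEulerian 1 2 (2 * n - 1)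
  rw [show 2 * n - 1 + 1 = 2 * n by omega,
    ← sum_congr rfl fun k _ ↦ eulerianB_eq_affineEulerian (2 * n - 1) k,
    sum_range_two_mul_of_reflect hsymm, two_nsmul, ← two_mul] at htotal
  exact htotal

theorem innerSum_top {n k : ℕ} (hk : k < n) : innerSum n k (n - 1) = (-1) ^ k := by
  rw [innerSum, sum_eq_single_of_mem k (self_mem_range_succ k)]
  · rw [if_pos (by omega), Nat.choose_self, show 2 * (n - 1 - k) + 1 = 2 * n - 2 * k - 1 by omega,
      Nat.choose_self]
    simp
  · intro i hi hik
    have hik : i < k := by have := mem_range.mp hi; omega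
    rw [if_pos (by omega),
      Nat.choose_eq_zero_of_lt (show 2 * n - 2 * k - 1 < 2 * (n - 1 - i) + 1 by omega),
      Nat.cast_zero, mul_zero]

theorem sum_range_mul_neg_one_pow_mul_innerSum_top (e : ℕ → ℤ) (n : ℕ) :
    ∑ k ∈ range n, e k * (-1) ^ k * innerSum n k (n - 1) = ∑ k ∈ range n, e k := by
  refine sum_congr rfl fun k hk ↦ ?_
  rw [innerSum_top (mem_range.mp hk), mul_assoc, ← pow_add, Even.neg_one_pow ⟨k, rfl⟩,
    mul_one]

theorem CB_top {n : ℕ} (hn : n ≠ 0) :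
    CB n (n - 1) = 2 ^ (2 * n - 2) * (2 * n - 1).factorial := by
  have h := two_mul_sum_range_eulerianB hn
  rw [show (2 : ℤ) ^ (2 * n - 1) = 2 ^ (2 * n - 2) * 2 by rw [← pow_succ]; congr 1; omega] at h
  rw [CB, sum_range_mul_neg_one_pow_mul_innerSum_top]
  linarith

theorem two_mul_CA_top {n : ℕ} (hn : n ≠ 0) : 2 * CA n (n - 1) = (2 * n).factorial := by
  rw [CA, sum_range_mul_neg_one_pow_mul_innerSum_top, two_mul_sum_range_eulerianA hn]

section EvenPolynomial

open Polynomial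

variable {R : Type*} [Semiring R] (c : ℕ → R) {n : ℕ}

theorem coeff_sum_C_mul_X_pow_two_mul {t : ℕ} (ht : t < n) :
    (∑ s ∈ range n, C (c s) * X ^ (2 * s)).coeff (2 * t) = c t := by
  rw [finsetSum_coeff, sum_eq_single_of_mem t (mem_range.mpr ht)]
  · rw [coeff_C_mul_X_pow, if_pos rfl]
  · intro s _ hst
    rw [coeff_C_mul_X_pow, if_neg (by omega)]

theorem natDegree_sum_C_mul_X_pow_two_mul_le :
    (∑ s ∈ range n, C (c s) * X ^ (2 * s)).natDegree ≤ 2 * n - 2 :=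
  natDegree_sum_le_of_forall_le _ _ fun s hs ↦
    (natDegree_C_mul_X_pow_le _ _).trans (by have := mem_range.mp hs; omega)

theorem coeff_C_mul_sum_C_mul_X_pow_two_mul (r : R) (hn : n ≠ 0) :
    (C r * ∑ s ∈ range n, C (c s) * X ^ (2 * s)).coeff (2 * n - 2) = r * c (n - 1) := by
  rw [coeff_C_mul, show 2 * n - 2 = 2 * (n - 1) by omega,
    coeff_sum_C_mul_X_pow_two_mul c (by omega)]

theorem natDegree_C_mul_sum_C_mul_X_pow_two_mul (r : R) (hn : n ≠ 0) (h : r * c (n - 1) ≠ 0) :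
    (C r * ∑ s ∈ range n, C (c s) * X ^ (2 * s)).natDegree = 2 * n - 2 :=
  natDegree_eq_of_le_of_coeff_ne_zero
    ((natDegree_C_mul_le _ _).trans (natDegree_sum_C_mul_X_pow_two_mul_le c))
    (by rwa [coeff_C_mul_sum_C_mul_X_pow_two_mul c r hn])

end EvenPolynomial

theorem leading_coefficients (n : ℕ) (hn : 1 ≤ n) :
    (XiPoly n).coeff (2 * n - 2) = (-1 : ℝ) ^ (n + 1) / 2 ^ (2 * n) ∧
    (LamPoly n).coeff (2 * n - 2) = (-1 : ℝ) ^ (n + 1) / (2 ^ (2 * n + 1) - 1) ∧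
    CB n (n - 1) = 2 ^ (2 * n - 2) * (Nat.factorial (2 * n - 1)) ∧
    2 * CA n (n - 1) = (Nat.factorial (2 * n) : ℤ) ∧
    (XiPoly n).natDegree = 2 * n - 2 ∧
    (LamPoly n).natDegree = 2 * n - 2 := by
  have hn0 : n ≠ 0 := by omega
  have hCB := CB_top hn0
  have hCA := two_mul_CA_top hn0
  have hXi : (-1 : ℝ) ^ (n + 1) / (2 ^ (4 * n - 2) * (2 * n - 1).factorial) * CB n (n - 1) =
      (-1) ^ (n + 1) / 2 ^ (2 * n) := by
    rw [hCB, show 4 * n - 2 = 2 * n - 2 + 2 * n by omega, pow_add]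
    push_cast
    field_simp
    ring
  have hden : (2 : ℝ) ^ (2 * n + 1) - 1 ≠ 0 :=
    sub_ne_zero.mpr (one_lt_pow₀ one_lt_two (by omega)).ne'
  have hLam : 2 * (-1 : ℝ) ^ (n + 1) / ((2 ^ (2 * n + 1) - 1) * (2 * n).factorial) *
      CA n (n - 1) = (-1) ^ (n + 1) / (2 ^ (2 * n + 1) - 1) := by
    rw [show (CA n (n - 1) : ℝ) = (2 * n).factorial / 2 by
      rw [eq_div_iff two_ne_zero, mul_comm]; exact_mod_cast hCA]
    field_simp
  refine ⟨?_, ?_, hCB, hCA, ?_, ?_⟩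
  · rw [XiPoly, coeff_C_mul_sum_C_mul_X_pow_two_mul _ _ hn0, hXi]
  · rw [LamPoly, coeff_C_mul_sum_C_mul_X_pow_two_mul _ _ hn0, hLam]
  · refine natDegree_C_mul_sum_C_mul_X_pow_two_mul _ _ hn0 ?_
    rw [hXi]
    exact div_ne_zero (by simp) (by positivity)
  · refine natDegree_C_mul_sum_C_mul_X_pow_two_mul _ _ hn0 ?_
    rw [hLam]
    exact div_ne_zero (by simp) hden
end

section
/- For every integer n ≥ 1, Ξ_n(1) = (−1)^{n+1}/(2^{2n}(2n−1)!) and Λ_n(1) = (−1)^{n+1}·2^{2n−1}/((2^{2n+1}−1)(2n)!). -/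
open Finset

/-!
At `x = 1` both polynomials reduce to the sum of their coefficients. Summing `innerSum n k t`
over `t` turns the second binomial into a sum of odd-index binomials of `2(n-k-1)+1`, equal to
`4^(n-k-1)`, which leaves the alternating sum `∑ (-1)^i C(k,i)`; this vanishes unless `k = 0`.
Hence `∑ₜ C_{n,t} = ⟨m,0⟩ · 4^(n-1) = 4^(n-1)` for both types.
-/

theorem Finset.sum_range_two_mul {M : Type*} [AddCommMonoid M] (f : ℕ → M) (a : ℕ) :
    ∑ j ∈ range (2 * a), f j = ∑ s ∈ range a, (f (2 * s) + f (2 * s + 1)) := by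
  induction a with
  | zero => simp
  | succ a ih => rw [mul_add_one, sum_range_succ, sum_range_succ, ih, sum_range_succ, add_assoc]

theorem Nat.sum_range_choose_odd (a : ℕ) :
    ∑ s ∈ range (a + 1), (2 * a + 1).choose (2 * s + 1) = 4 ^ a := by
  calc ∑ s ∈ range (a + 1), (2 * a + 1).choose (2 * s + 1)
      = ∑ j ∈ range (2 * (a + 1)), (2 * a).choose j := by
        rw [sum_range_two_mul]
        exact sum_congr rfl fun s _ => Nat.choose_succ_succ _ _
    _ = ∑ j ∈ range (2 * a + 1), (2 * a).choose j := by
        rw [mul_add_one, sum_range_succ, Nat.choose_eq_zero_of_lt (by omega), add_zero]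
    _ = 4 ^ a := by rw [Nat.sum_range_choose, pow_mul]; norm_num

theorem Nat.sum_range_choose_odd_of_lt {a m : ℕ} (h : a < m) :
    ∑ s ∈ range m, ((2 * a + 1).choose (2 * s + 1) : ℤ) = 4 ^ a := by
  rw [← sum_range_add_sum_Ico _ h]
  have hvanish : ∑ s ∈ Ico (a + 1) m, ((2 * a + 1).choose (2 * s + 1) : ℤ) = 0 :=
    sum_eq_zero fun s hs => by
      rw [Nat.choose_eq_zero_of_lt (by simp at hs; omega), Nat.cast_zero]
  rw [hvanish, add_zero]
  exact_mod_cast sum_range_choose_odd a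

theorem sum_range_innerSum {n k : ℕ} (hk : k < n) :
    ∑ t ∈ range n, innerSum n k t =
      (∑ i ∈ range (k + 1), (-1 : ℤ) ^ i * k.choose i) * 4 ^ (n - k - 1) := by
  simp only [innerSum, sum_mul]
  rw [sum_comm]
  refine sum_congr rfl fun i hi => ?_
  have hik : i ≤ k := Nat.lt_succ_iff.mp (mem_range.mp hi)
  obtain ⟨m, rfl⟩ : ∃ m, n = i + m := ⟨n - i, by omega⟩
  have hodd : 2 * (i + m) - 2 * k - 1 = 2 * (i + m - k - 1) + 1 := by omega
  rw [sum_range_add, sum_eq_zero fun t ht => if_neg (by simp at ht; omega), zero_add]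
  simp only [le_add_iff_nonneg_right, zero_le, if_true, Nat.add_sub_cancel_left, hodd, ← mul_sum]
  rw [Nat.sum_range_choose_odd_of_lt (by omega)]

theorem sum_range_innerSum_eq_ite {n k : ℕ} (hk : k < n) :
    ∑ t ∈ range n, innerSum n k t = if k = 0 then 4 ^ (n - 1) else 0 := by
  rw [sum_range_innerSum hk, Int.alternating_sum_range_choose]
  split_ifs with h0
  · simp [h0]
  · rw [zero_mul]

theorem sum_range_sum_mul_innerSum {n : ℕ} (hn : 0 < n) (E : ℕ → ℤ) :
    ∑ t ∈ range n, ∑ k ∈ range n, E k * (-1) ^ k * innerSum n k t = E 0 * 4 ^ (n - 1) := by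
  rw [sum_comm]
  calc ∑ k ∈ range n, ∑ t ∈ range n, E k * (-1) ^ k * innerSum n k t
      = ∑ k ∈ range n, if k = 0 then E 0 * 4 ^ (n - 1) else 0 := by
        refine sum_congr rfl fun k hk => ?_
        rw [← mul_sum, sum_range_innerSum_eq_ite (mem_range.mp hk)]
        split_ifs with h0 <;> simp [h0]
    _ = E 0 * 4 ^ (n - 1) := by rw [sum_ite_eq', if_pos (mem_range.mpr hn)]

theorem eulerianA_zero (m : ℕ) : eulerianA m 0 = 1 := by
  simp [eulerianA]

theorem eulerianB_zero (m : ℕ) : eulerianB m 0 = 1 := by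
  simp [eulerianB]

theorem sum_range_CB {n : ℕ} (hn : 0 < n) : ∑ t ∈ range n, CB n t = 4 ^ (n - 1) := by
  simp only [CB, sum_range_sum_mul_innerSum hn, eulerianB_zero, one_mul]

theorem sum_range_CA {n : ℕ} (hn : 0 < n) : ∑ t ∈ range n, CA n t = 4 ^ (n - 1) := by
  simp only [CA, sum_range_sum_mul_innerSum hn, eulerianA_zero, one_mul]

theorem Xi_one {n : ℕ} (hn : 0 < n) :
    Xi n 1 = (-1 : ℝ) ^ (n + 1) / (2 ^ (2 * n) * (Nat.factorial (2 * n - 1))) := by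
  have hsum : ∑ t ∈ range n, (CB n t : ℝ) * 1 ^ (2 * t) = 2 ^ (2 * (n - 1)) := by
    simp only [one_pow, mul_one, pow_mul]
    norm_num
    exact_mod_cast sum_range_CB hn
  have hexp : 4 * n - 2 = 2 * n + 2 * (n - 1) := by omega
  rw [Xi, hsum, hexp, pow_add]
  field_simp
  ring

theorem Lam_one {n : ℕ} (hn : 0 < n) :
    Lam n 1 = (-1 : ℝ) ^ (n + 1) * 2 ^ (2 * n - 1) /
      ((2 ^ (2 * n + 1) - 1) * (Nat.factorial (2 * n))) := by
  have hsum : ∑ t ∈ range n, (CA n t : ℝ) * 1 ^ (2 * t) = 2 ^ (2 * (n - 1)) := by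
    simp only [one_pow, mul_one, pow_mul]
    norm_num
    exact_mod_cast sum_range_CA hn
  have hexp : 2 * n - 1 = 1 + 2 * (n - 1) := by omega
  rw [Lam, hsum, hexp, pow_add]
  ring

theorem values_at_one (n : ℕ) (hn : 1 ≤ n) :
    Xi n 1 = (-1 : ℝ) ^ (n + 1) / (2 ^ (2 * n) * (Nat.factorial (2 * n - 1))) ∧
    Lam n 1 = (-1 : ℝ) ^ (n + 1) * 2 ^ (2 * n - 1) /
      ((2 ^ (2 * n + 1) - 1) * (Nat.factorial (2 * n))) :=
  ⟨Xi_one hn, Lam_one hn⟩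
end

section
/- For every integer n ≥ 1 and every real x > 1, one has (−1)^{n+1}·Ξ_n(x) > 0 and (−1)^{n+1}·Λ_n(x) > 0. In particular, since Ξ_n and Λ_n are even, neither polynomial has a real zero outside the interval [−1,1]. -/
open Finset

/-!
Substituting `y = x²`, the generating function `∑ₜ innerSum n k t yᵗ` is the Cauchy product of
`(1 - y)ᵏ` with `Pₖ(y) = ∑ᵤ (2n-2k-1 choose 2u+1) yᵘ`. The sign `(-1)ᵏ` in `C_{n,t}` turns
`(1 - y)ᵏ` into `(y - 1)ᵏ`, so `∑ₜ C_{n,t} x^{2t} = ∑ₖ Eₖ (x² - 1)ᵏ Pₖ(x²)`, where `Eₖ` is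
the relevant Eulerian number. For `x² ≥ 1` every summand is nonnegative and the `k = 0` summand
is positive. Nonnegativity of both kinds of Eulerian numbers follows from one recurrence,
valid for the alternating sums built on any progression `a i + b` with `b ≤ a`.
-/

def eulerianAffine (a b m k : ℕ) : ℤ :=
  ∑ j ∈ range (k + 1), (-1 : ℤ) ^ j * (m + 1).choose j * ((a * (k - j) + b : ℕ) : ℤ) ^ m

theorem eulerianA_eq_eulerianAffine (m k : ℕ) : eulerianA m k = eulerianAffine 1 1 m k := by
  refine sum_congr rfl fun j hj => ?_
  rw [mem_range] at hj
  congr 3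
  omega

theorem eulerianB_eq_eulerianAffine (m k : ℕ) : eulerianB m k = eulerianAffine 2 1 m k := rfl

namespace eulerianAffine

variable (a b : ℕ)

@[simp]
theorem zero_right (m : ℕ) : eulerianAffine a b m 0 = (b : ℤ) ^ m := by
  simp [eulerianAffine]

theorem zero_succ (k : ℕ) : eulerianAffine a b 0 (k + 1) = 0 := by
  simpa [eulerianAffine] using Int.alternating_sum_range_choose_eq_choose (n := 0) (m := k + 1)

theorem succ_succ (m k : ℕ) :
    eulerianAffine a b (m + 1) (k + 1) =
      (a * (k + 1) + b : ℤ) * eulerianAffine a b m (k + 1) +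
        (a * (m - k + 1) - b : ℤ) * eulerianAffine a b m k := by
  have hterm : ∀ i ∈ range (k + 1),
      (-1 : ℤ) ^ (i + 1) * (m + 2).choose (i + 1) * ((a * (k - i) + b : ℕ) : ℤ) ^ (m + 1) =
        (a * (k + 1) + b : ℤ) *
            ((-1) ^ (i + 1) * (m + 1).choose (i + 1) * ((a * (k - i) + b : ℕ) : ℤ) ^ m) +
          (a * (m - k + 1) - b : ℤ) *
            ((-1) ^ i * (m + 1).choose i * ((a * (k - i) + b : ℕ) : ℤ) ^ m) := by
    intro i hi
    have hik : i ≤ k := mem_range_succ_iff.mp hi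
    have hc : ((a * (k - i) + b : ℕ) : ℤ) = a * ((k : ℤ) - i) + b := by push_cast [hik]; ring
    have h1 : ((m + 2 : ℕ) : ℤ) * (m + 1).choose i = (m + 2).choose (i + 1) * (i + 1 : ℕ) := by
      exact_mod_cast Nat.add_one_mul_choose_eq (m + 1) i
    have h2 : ((m + 2).choose (i + 1) : ℤ) = (m + 1).choose i + (m + 1).choose (i + 1) := by
      exact_mod_cast Nat.choose_succ_succ (m + 1) i
    rw [pow_succ, hc]
    push_cast at h1
    linear_combination (-1) ^ (i + 1) * (a * ((k : ℤ) - i) + b) ^ m *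
      (a * h1 + (a * (k + 1) + b) * h2)
  simp only [eulerianAffine, sum_range_succ' _ (k + 1), Nat.add_sub_add_right,
    Nat.choose_zero_right]
  rw [sum_congr rfl hterm, sum_add_distrib, ← mul_sum, ← mul_sum]
  push_cast
  ring

theorem eq_zero_of_lt {m k : ℕ} (h : m < k) : eulerianAffine a b m k = 0 := by
  induction m generalizing k with
  | zero =>
    obtain ⟨k, rfl⟩ := Nat.exists_eq_add_one.mpr h
    exact zero_succ a b k
  | succ m ih =>
    obtain ⟨k, rfl⟩ := Nat.exists_eq_add_one.mpr (Nat.zero_lt_of_lt h)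
    rw [succ_succ, ih (by omega), ih (by omega), mul_zero, mul_zero, add_zero]

variable {a b} in
theorem nonneg (hba : b ≤ a) (m k : ℕ) : 0 ≤ eulerianAffine a b m k := by
  induction m generalizing k with
  | zero => cases k <;> simp [zero_succ]
  | succ m ih =>
    cases k with
    | zero => simp
    | succ k =>
      rcases lt_or_ge m k with hmk | hkm
      · rw [eq_zero_of_lt a b (by omega)]
      · rw [succ_succ]
        have hcoeff : (0 : ℤ) ≤ a * (m - k + 1) - b := by
          have : (b : ℤ) ≤ a := by exact_mod_cast hba
          nlinarith [(by exact_mod_cast hkm : (k : ℤ) ≤ m)]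
        have hE₁ := ih (k + 1)
        have hE₀ := ih k
        positivity

end eulerianAffine

section CauchyProduct

variable {R : Type*} [CommSemiring R]

theorem sum_range_ite_mul_pow (c : R) (b : ℕ → R) (y : R) {i K n : ℕ} (hi : i ≤ K)
    (hb : ∀ u, n ≤ K + u → b u = 0) :
    ∑ t ∈ range n, (if i ≤ t then c * b (t - i) else 0) * y ^ t =
      c * y ^ i * ∑ u ∈ range n, b u * y ^ u := by
  simp only [ite_mul, zero_mul]
  rw [← sum_filter, range_eq_Ico, Ico_filter_le, max_eq_right (Nat.zero_le i),
    sum_Ico_eq_sum_range, ← range_eq_Ico, mul_sum]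
  simp only [Nat.add_sub_cancel_left]
  apply sum_subset_zero_on_sdiff (range_subset_range.mpr (Nat.sub_le n i))
  · intro u hu
    simp only [mem_sdiff, mem_range, not_lt] at hu
    rw [hb u (by omega), zero_mul, mul_zero]
  · intro u _
    rw [pow_add]
    ring

/-- Since `b u` vanishes for `u ≥ n - K`, the Cauchy product on the right has degree `< n`. -/
theorem sum_range_convolution_mul_pow (a b : ℕ → R) (y : R) {K n : ℕ}
    (hb : ∀ u, n ≤ K + u → b u = 0) :
    ∑ t ∈ range n, (∑ i ∈ range (K + 1), if i ≤ t then a i * b (t - i) else 0) * y ^ t =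
      (∑ i ∈ range (K + 1), a i * y ^ i) * ∑ u ∈ range n, b u * y ^ u := by
  simp_rw [sum_mul]
  rw [sum_comm]
  exact sum_congr rfl fun i hi =>
    sum_range_ite_mul_pow _ b y (mem_range_succ_iff.mp hi) hb

end CauchyProduct

theorem one_sub_pow_eq_sum {R : Type*} [CommRing R] (y : R) (k : ℕ) :
    (1 - y) ^ k = ∑ i ∈ range (k + 1), (-1) ^ i * (k.choose i : R) * y ^ i := by
  rw [sub_eq_neg_add, add_pow]
  refine sum_congr rfl fun i _ => ?_
  rw [neg_pow, one_pow]
  ring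

theorem sum_innerSum_mul_pow (n k : ℕ) (y : ℝ) :
    ∑ t ∈ range n, (innerSum n k t : ℝ) * y ^ t =
      (1 - y) ^ k * ∑ u ∈ range n, ((2 * n - 2 * k - 1).choose (2 * u + 1) : ℝ) * y ^ u := by
  rw [one_sub_pow_eq_sum, ← sum_range_convolution_mul_pow]
  · simp [innerSum]
  · intro u hu
    rw [Nat.choose_eq_zero_of_lt (by omega), Nat.cast_zero]

theorem sum_alternating_innerSum_mul_pow_pos {n : ℕ} (hn : 1 ≤ n) {E : ℕ → ℤ}
    (hE : ∀ k, 0 ≤ E k) (hE0 : 0 < E 0) {y : ℝ} (hy : 1 ≤ y) :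
    0 < ∑ t ∈ range n, ((∑ k ∈ range n, E k * (-1) ^ k * innerSum n k t : ℤ) : ℝ) * y ^ t := by
  set P : ℕ → ℝ := fun k => ∑ u ∈ range n, ((2 * n - 2 * k - 1).choose (2 * u + 1) : ℝ) * y ^ u
  have hP : ∀ k, 0 ≤ P k := fun k => by positivity
  have hP0 : 0 < P 0 := by
    refine sum_pos' (fun u _ => by positivity) ⟨0, mem_range.mpr hn, ?_⟩
    simp only [mul_zero, Nat.sub_zero, zero_add, Nat.choose_one_right, pow_zero, mul_one]
    exact_mod_cast (by omega : 0 < 2 * n - 1)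
  have hsum : ∑ t ∈ range n, ((∑ k ∈ range n, E k * (-1) ^ k * innerSum n k t : ℤ) : ℝ) * y ^ t =
      ∑ k ∈ range n, (E k : ℝ) * ((y - 1) ^ k * P k) := by
    push_cast
    simp_rw [sum_mul]
    rw [sum_comm]
    refine sum_congr rfl fun k _ => ?_
    simp_rw [mul_assoc, ← mul_sum, sum_innerSum_mul_pow]
    rw [show (y - 1) ^ k = (-1) ^ k * (1 - y) ^ k by rw [← mul_pow]; ring]
    ring
  rw [hsum]
  refine sum_pos' (fun k _ => ?_)
    ⟨0, mem_range.mpr hn, by simpa using mul_pos (by exact_mod_cast hE0) hP0⟩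
  have hEk : (0 : ℝ) ≤ E k := by exact_mod_cast hE k
  have hy₁ := sub_nonneg.mpr hy
  have hPk := hP k
  positivity

theorem neg_one_pow_mul_self {M : Type*} [Monoid M] [HasDistribNeg M] (n : ℕ) :
    ((-1 : M) ^ n) * (-1) ^ n = 1 := by
  rw [← pow_add, ← two_mul, pow_mul, neg_one_sq, one_pow]

theorem neg_one_pow_mul_Xi_pos {n : ℕ} (hn : 1 ≤ n) {x : ℝ} (hx : 1 ≤ x ^ 2) :
    0 < (-1) ^ (n + 1) * Xi n x := by
  have hS : 0 < ∑ t ∈ range n, (CB n t : ℝ) * x ^ (2 * t) := by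
    simp_rw [pow_mul]
    exact sum_alternating_innerSum_mul_pow_pos hn
      (fun k => eulerianB_eq_eulerianAffine _ k ▸ eulerianAffine.nonneg (by norm_num) _ k)
      (by simp [eulerianB_eq_eulerianAffine]) hx
  rw [Xi, ← mul_assoc, mul_div_assoc', neg_one_pow_mul_self]
  positivity

theorem neg_one_pow_mul_Lam_pos {n : ℕ} (hn : 1 ≤ n) {x : ℝ} (hx : 1 ≤ x ^ 2) :
    0 < (-1) ^ (n + 1) * Lam n x := by
  have hS : 0 < ∑ t ∈ range n, (CA n t : ℝ) * x ^ (2 * t) := by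
    simp_rw [pow_mul]
    exact sum_alternating_innerSum_mul_pow_pos hn
      (fun k => eulerianA_eq_eulerianAffine _ k ▸ eulerianAffine.nonneg le_rfl _ k)
      (by simp [eulerianA_eq_eulerianAffine]) hx
  have hD : (0 : ℝ) < 2 ^ (2 * n + 1) - 1 := sub_pos.mpr (one_lt_pow₀ one_lt_two (by omega))
  rw [Lam, ← mul_assoc, mul_div_assoc', mul_left_comm, neg_one_pow_mul_self, mul_one]
  positivity

theorem positivity_beyond_one (n : ℕ) (hn : 1 ≤ n) :
    (∀ x : ℝ, 1 < x → 0 < (-1 : ℝ) ^ (n + 1) * Xi n x ∧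
      0 < (-1 : ℝ) ^ (n + 1) * Lam n x) ∧
    (∀ x : ℝ, 1 < |x| → Xi n x ≠ 0 ∧ Lam n x ≠ 0) := by
  have key : ∀ x : ℝ, 1 < |x| →
      0 < (-1 : ℝ) ^ (n + 1) * Xi n x ∧ 0 < (-1 : ℝ) ^ (n + 1) * Lam n x := fun x hx =>
    have hx2 : 1 ≤ x ^ 2 := ((one_lt_sq_iff_one_lt_abs x).mpr hx).le
    ⟨neg_one_pow_mul_Xi_pos hn hx2, neg_one_pow_mul_Lam_pos hn hx2⟩
  refine ⟨fun x hx => key x (hx.trans_le (le_abs_self x)), fun x hx => ?_⟩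
  obtain ⟨hXi, hLam⟩ := key x hx
  exact ⟨right_ne_zero_of_mul hXi.ne', right_ne_zero_of_mul hLam.ne'⟩
end

section
/- For every m ∈ ℕ and every real z with 0 < |z| < 1, the imaginary part of the polylogarithm of negative order satisfies Im(Li_{−m}(iz))/z = (1/(1+z²)^{m+1}) · Σ_{r=0}^{m} ⟨m,r⟩^B (−z²)^r, where Li_{−m}(w) = Σ_{k=1}^∞ k^m w^k for complex |w| < 1. -/
open Finset

/-- The polylogarithm of negative integer order −m: Li_{−m}(w) = Σ_{k≥1} k^m w^k. -/
noncomputable def negPolylog (m : ℕ) (w : ℂ) : ℂ :=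
  ∑' k : ℕ, ((k : ℂ) + 1) ^ m * w ^ (k + 1)

/-!
Splitting `Li_{-m}(iz) = Σ_k k^m (iz)^k` by the parity of `k`, the even terms are real and the
odd ones give `Im Li_{-m}(iz) = z Σ_n (2n+1)^m x^n` with `x = -z²`. Multiplying the series
`Σ_n (2n+1)^m x^n` by `(1 - x)^(m+1)` (a Cauchy product) gives the coefficients
`Σ_j (-1)^j C(m+1, j) (2(N-j)+1)^m = ⟨m, N⟩^B`, and for `N > m` this is an `(m+1)`-st forward
difference of the degree-`m` polynomial `(2t+1)^m`, hence zero.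
-/

open Polynomial in
theorem eulerianB_eq_zero_of_lt {m N : ℕ} (h : m < N) : eulerianB m N = 0 := by
  have hP : ((2 * X + 1 : ℤ[X]) ^ m).natDegree < m + 1 :=
    Nat.lt_succ_of_le <| (natDegree_pow_le_of_le m (by compute_degree)).trans (mul_one m).le
  have hΔ := congrFun (fwdDiff_iter_eq_zero_of_degree_lt hP) ((N - (m + 1) : ℕ) : ℤ)
  rw [fwdDiff_iter_eq_sum_shift, ← sum_range_reflect, Pi.zero_apply] at hΔ
  rw [eulerianB, ← sum_subset (range_subset_range.2 (by omega : m + 2 ≤ N + 1)), ← hΔ]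
  · refine sum_congr rfl fun j hj ↦ ?_
    have hj := mem_range.1 hj
    have hk : m + 1 + 1 - 1 - j = m + 1 - j := by omega
    have hN : N - (m + 1) + (m + 1 - j) = N - j := by omega
    rw [hk, Nat.choose_symm (by omega), Nat.sub_sub_self (by omega : j ≤ m + 1), nsmul_one,
      ← Nat.cast_add, hN]
    simp
  · intro j _ hj
    rw [Nat.choose_eq_zero_of_lt (by simp only [mem_range, not_lt] at hj; omega)]
    simp

open Asymptotics Filter in
theorem summable_norm_odd_pow_mul_geometric {R : Type*} [NormedRing R] (m : ℕ) {x : R}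
    (hx : ‖x‖ < 1) : Summable fun n : ℕ ↦ ‖(2 * (n : R) + 1) ^ m * x ^ n‖ := by
  have hO : (fun n : ℕ ↦ (((2 * n + 1) ^ m : ℕ) : ℝ)) =O[atTop] fun n ↦ ((n ^ m : ℕ) : ℝ) := by
    push_cast
    refine IsBigO.pow (IsBigO.of_bound 3 ?_) m
    filter_upwards [eventually_ge_atTop 1] with n hn
    have : (1 : ℝ) ≤ n := by exact_mod_cast hn
    simp only [Real.norm_eq_abs]
    rw [abs_of_nonneg (by positivity), abs_of_nonneg (by positivity)]
    linarith
  simpa using summable_norm_mul_geometric_of_norm_lt_one hx hO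

theorem one_sub_pow_mul_tsum_odd_pow_mul_geometric {R : Type*} [NormedCommRing R]
    [CompleteSpace R] (m : ℕ) {x : R} (hx : ‖x‖ < 1) :
    (1 - x) ^ (m + 1) * ∑' n : ℕ, (2 * (n : R) + 1) ^ m * x ^ n =
      ∑ r ∈ range (m + 1), (eulerianB m r : R) * x ^ r := by
  set c : ℕ → R := fun j ↦ (-x) ^ j * ((m + 1).choose j : R)
  have hc : ∀ j ∉ range (m + 2), c j = 0 := fun j hj ↦ by
    rw [mem_range, not_lt] at hj
    simp only [c, Nat.choose_eq_zero_of_lt (by omega : m + 1 < j), Nat.cast_zero, mul_zero]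
  have hsum : (1 - x) ^ (m + 1) = ∑' j, c j := by
    rw [tsum_eq_sum hc, sub_eq_neg_add, add_pow]
    simp [c]
  have hcoeff : ∀ N, ∑ j ∈ range (N + 1), c j * ((2 * ((N - j : ℕ) : R) + 1) ^ m * x ^ (N - j)) =
      eulerianB m N * x ^ N := fun N ↦ by
    rw [eulerianB, Int.cast_sum, sum_mul]
    refine sum_congr rfl fun j hj ↦ ?_
    rw [← pow_mul_pow_sub x (Nat.le_of_lt_succ (mem_range.1 hj)), neg_pow]
    push_cast
    ring
  rw [hsum, tsum_mul_tsum_eq_tsum_sum_range_of_summable_norm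
      (summable_of_ne_finset_zero (s := range (m + 2)) (by simpa using hc))
      (summable_norm_odd_pow_mul_geometric m hx)]
  simp_rw [hcoeff]
  exact tsum_eq_sum fun N hN ↦ by
    rw [eulerianB_eq_zero_of_lt (by simpa using hN), Int.cast_zero, zero_mul]

theorem summable_negPolylog (m : ℕ) {w : ℂ} (hw : ‖w‖ < 1) :
    Summable fun k : ℕ ↦ ((k : ℂ) + 1) ^ m * w ^ (k + 1) := by
  have := (summable_nat_add_iff (f := fun n : ℕ ↦ (n : ℂ) ^ m * w ^ n) 1).2
    (summable_pow_mul_geometric_of_norm_lt_one m hw)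
  simpa only [Nat.cast_add, Nat.cast_one] using this

open Complex in
theorem im_negPolylog_I_mul (m : ℕ) {z : ℝ} (hz : |z| < 1) :
    (negPolylog m (I * z)).im = z * ∑' n : ℕ, (2 * (n : ℝ) + 1) ^ m * (-z ^ 2) ^ n := by
  have hs := summable_negPolylog m (w := I * z) (by simpa using hz)
  set f : ℕ → ℝ := fun k ↦ (((k : ℂ) + 1) ^ m * (I * z) ^ (k + 1)).im
  have hf : Summable f := imCLM.summable hs
  have hsq : (I * z) ^ 2 = ((-z ^ 2 : ℝ) : ℂ) := by simp [mul_pow]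
  have heven (j : ℕ) : f (2 * j) = z * ((2 * (j : ℝ) + 1) ^ m * (-z ^ 2) ^ j) := by
    have : ((2 * j : ℕ) + 1 : ℂ) = ((2 * j + 1 : ℝ) : ℂ) := by push_cast; ring
    simp only [f]
    rw [pow_succ, pow_mul, hsq, this, ← ofReal_pow, ← ofReal_pow, ← mul_assoc, ← ofReal_mul,
      im_ofReal_mul]
    simp only [mul_im, I_re, I_im, ofReal_re, ofReal_im]
    ring
  have hodd (j : ℕ) : f (2 * j + 1) = 0 := by
    have : ((2 * j + 1 : ℕ) + 1 : ℂ) = ((2 * j + 2 : ℝ) : ℂ) := by push_cast; ring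
    simp only [f]
    rw [show 2 * j + 1 + 1 = 2 * (j + 1) by ring, pow_mul, hsq, this, ← ofReal_pow, ← ofReal_pow,
      ← ofReal_mul, ofReal_im]
  have h2 : Function.Injective fun j : ℕ ↦ 2 * j := mul_right_injective₀ two_ne_zero
  rw [negPolylog, im_tsum hs, ← tsum_even_add_odd (f := f) (hf.comp_injective h2)
    (hf.comp_injective ((add_left_injective 1).comp h2))]
  simp only [heven, hodd, tsum_zero, add_zero, tsum_mul_left]

theorem im_negPolylog_eq (m : ℕ) (z : ℝ) (hz0 : 0 < |z|) (hz1 : |z| < 1) :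
    (negPolylog m (Complex.I * z)).im / z =
      (1 / (1 + z ^ 2) ^ (m + 1)) *
        ∑ r ∈ Finset.range (m + 1), (eulerianB m r : ℝ) * (-z ^ 2) ^ r := by
  have hx : ‖-z ^ 2‖ < 1 := by
    simpa [sq_abs] using pow_lt_one₀ (abs_nonneg z) hz1 two_ne_zero
  rw [im_negPolylog_I_mul m hz1, mul_div_cancel_left₀ _ (abs_pos.mp hz0),
    ← one_sub_pow_mul_tsum_odd_pow_mul_geometric m hx, sub_neg_eq_add]
  field_simp
end
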